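/- Let G be a finite group and H ⊆ K subgroups of G with H non-abelian. If p is the smallest prime dividing |Aut(K)| and q is the smallest prime dividing |H|, then Pr(H,Aut(K)) ≤ (q² + p − 1)/(pq²). In particular, if p = q then Pr(H,Aut(K)) ≤ (p² + p − 1)/p³ ≤ 5/8. -/

import Mathlib

/-!
Counting the pairs `(x, α)` with `α x = x` fibrewise over `x ∈ H` gives `∑ₓ |Stab(x)|`. For
`x ∈ L(H, Aut K)` the stabilizer is all of `Aut K`; otherwise it is proper, so its index divides
`|Aut K|` and is at least `p`. Hence `Pr(H, Aut K) ≤ 1/p + (1 - 1/p) |L|/|H|`.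

Inner automorphisms of `K` show `L ≤ Z(H)`. As `H` is non-abelian, `H/Z(H)` is not cyclic, so
`[H : Z(H)]` is neither `1` nor prime and is at least the square of its least prime factor,
which is `≥ q`. Thus `|L|/|H| ≤ 1/q²`.
-/

open scoped Pointwise Classical

section AutoCommuting

variable {G : Type*} [Group G]

/-- The set of pairs `(x, α) ∈ H × Aut(K)` whose autocommutator `[x,α] = x⁻¹ α(x)` equals `g`. -/
def autPairs (H K : Subgroup G) (hHK : H ≤ K) (g : G) : Set (↥H × MulAut ↥K) :=
  {p | ((p.1 : G))⁻¹ * ((p.2 ⟨(p.1 : G), hHK p.1.2⟩ : ↥K) : G) = g}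

/-- The generalized autocommuting probability `Pr_g(H, Aut(K))`. -/
noncomputable def prAut (H K : Subgroup G) (hHK : H ≤ K) (g : G) : ℚ :=
  (Nat.card (autPairs H K hHK g) : ℚ) /
    ((Nat.card ↥H : ℚ) * (Nat.card (MulAut ↥K) : ℚ))

/-- The orbit `orb_K(x)` of `x ∈ K` under the natural action of `Aut(K)` on `K`. -/
def orbK (K : Subgroup G) (x : ↥K) : Set ↥K := MulAction.orbit (MulAut ↥K) x

/-- `C_{Aut(K)}(x)`, the set of automorphisms of `K` fixing `x`. -/
def centAut (K : Subgroup G) (x : ↥K) : Set (MulAut ↥K) := {α | α x = x}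

/-- `C_{Aut(K)}(H)`, the set of automorphisms of `K` fixing every element of `H`. -/
def centAutH (H K : Subgroup G) (hHK : H ≤ K) : Set (MulAut ↥K) :=
  {α | ∀ x : ↥H, α ⟨(x : G), hHK x.2⟩ = ⟨(x : G), hHK x.2⟩}

/-- `L(H, Aut(K)) = {x ∈ H : [x,α] = 1 for all α ∈ Aut(K)}`, as a subgroup of `H`. -/
def absCent (H K : Subgroup G) (hHK : H ≤ K) : Subgroup ↥H where
  carrier := {x | ∀ α : MulAut ↥K, α ⟨(x : G), hHK x.2⟩ = ⟨(x : G), hHK x.2⟩}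
  one_mem' := by
    intro α
    have h1 : (⟨((1 : ↥H) : G), hHK (1 : ↥H).2⟩ : ↥K) = 1 := rfl
    rw [h1, map_one]
  mul_mem' := by
    intro a b ha hb α
    have h1 : (⟨((a * b : ↥H) : G), hHK (a * b).2⟩ : ↥K)
        = ⟨(a : G), hHK a.2⟩ * ⟨(b : G), hHK b.2⟩ := rfl
    rw [h1, map_mul, ha α, hb α]
  inv_mem' := by
    intro a ha α
    have h1 : (⟨((a⁻¹ : ↥H) : G), hHK (a⁻¹).2⟩ : ↥K) = (⟨(a : G), hHK a.2⟩ : ↥K)⁻¹ := rfl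
    rw [h1, map_inv, ha α]

theorem mem_absCent {H K : Subgroup G} {hHK : H ≤ K} {x : ↥H} :
    x ∈ absCent H K hHK ↔ ∀ α : MulAut ↥K, α ⟨(x : G), hHK x.2⟩ = ⟨(x : G), hHK x.2⟩ :=
  Iff.rfl

/-- `S(H, Aut(K)) = {[x,α] : x ∈ H, α ∈ Aut(K)}`, as a subset of `K`. -/
def autCommSet (H K : Subgroup G) (hHK : H ≤ K) : Set ↥K :=
  {k | ∃ x : ↥H, ∃ α : MulAut ↥K,
    (⟨(x : G), hHK x.2⟩ : ↥K)⁻¹ * α ⟨(x : G), hHK x.2⟩ = k}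

end AutoCommuting
open MulAction

section IndexBounds

variable {Γ : Type*} [Group Γ] [Finite Γ]

omit [Finite Γ] in
theorem Subgroup.le_minFac_index {S : Subgroup Γ} (hS : S ≠ ⊤) {p : ℕ}
    (hmin : ∀ r : ℕ, r.Prime → r ∣ Nat.card Γ → p ≤ r) :
    p ≤ S.index.minFac :=
  hmin _ (Nat.minFac_prime (mt Subgroup.index_eq_one.mp hS))
    ((Nat.minFac_dvd _).trans S.index_dvd_card)

theorem Subgroup.mul_card_le_card_of_ne_top {S : Subgroup Γ} (hS : S ≠ ⊤) {p : ℕ}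
    (hmin : ∀ r : ℕ, r.Prime → r ∣ Nat.card Γ → p ≤ r) :
    p * Nat.card S ≤ Nat.card Γ :=
  calc p * Nat.card S ≤ S.index * Nat.card S :=
        Nat.mul_le_mul_right _ ((S.le_minFac_index hS hmin).trans
          (Nat.minFac_le (Nat.pos_of_ne_zero S.index_ne_zero_of_finite)))
    _ = Nat.card Γ := by rw [mul_comm, S.card_mul_index]

omit [Finite Γ] in
theorem Subgroup.not_prime_index_center (h : ¬ IsMulCommutative Γ) :
    ¬ (Subgroup.center Γ).index.Prime := fun hprime =>
  have : Fact (Nat.card (Γ ⧸ Subgroup.center Γ)).Prime := ⟨hprime⟩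
  have : IsCyclic (Γ ⧸ Subgroup.center Γ) := isCyclic_of_prime_card rfl
  h (isMulCommutative_of_isCyclic_quotient_center_self Γ)

theorem Subgroup.sq_le_index_center (h : ¬ IsMulCommutative Γ) {q : ℕ}
    (hmin : ∀ r : ℕ, r.Prime → r ∣ Nat.card Γ → q ≤ r) :
    q ^ 2 ≤ (Subgroup.center Γ).index :=
  calc q ^ 2 ≤ (Subgroup.center Γ).index.minFac ^ 2 :=
        Nat.pow_le_pow_left (le_minFac_index (mt Subgroup.center_eq_top_iff.mp h) hmin) 2
    _ ≤ (Subgroup.center Γ).index :=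
        Nat.minFac_sq_le_self (Nat.pos_of_ne_zero index_ne_zero_of_finite)
          (not_prime_index_center h)

end IndexBounds

section AutoCommuting

variable {G : Type*} [Group G] {H K : Subgroup G} (hHK : H ≤ K)

theorem absCent_le_center : absCent H K hHK ≤ Subgroup.center H := by
  refine fun x hx => Subgroup.mem_center_iff.mpr fun h => Subtype.ext ?_
  have : (h : G) * x * (h : G)⁻¹ = x :=
    congrArg Subtype.val ((mem_absCent.mp hx) (MulAut.conj (Subgroup.inclusion hHK h)))
  exact mul_inv_eq_iff_eq_mul.mp this

variable [Finite G]

theorem card_autPairs_one [Fintype H] :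
    Nat.card (autPairs H K hHK 1) =
      ∑ x : H, Nat.card (stabilizer (MulAut K) (Subgroup.inclusion hHK x)) := by
  rw [← Nat.card_sigma]
  refine Nat.card_congr
    { toFun := fun a => ⟨a.1.1, a.1.2, Subtype.ext (inv_mul_eq_one.mp a.2).symm⟩
      invFun := fun a => ⟨(a.1, a.2.1), inv_mul_eq_one.mpr (congrArg Subtype.val a.2.2).symm⟩
      left_inv := fun _ => rfl
      right_inv := fun _ => rfl }

theorem mul_card_autPairs_one_add_le {p : ℕ}
    (hmin : ∀ r : ℕ, r.Prime → r ∣ Nat.card (MulAut K) → p ≤ r) :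
    p * Nat.card (autPairs H K hHK 1) + Nat.card (absCent H K hHK) * Nat.card (MulAut K) ≤
      (p * Nat.card (absCent H K hHK) + Nat.card H) * Nat.card (MulAut K) := by
  have := Fintype.ofFinite H
  set L := absCent H K hHK
  set A := Nat.card (MulAut K)
  have hterm (x : H) :
      p * Nat.card (stabilizer (MulAut K) (Subgroup.inclusion hHK x)) + (if x ∈ L then A else 0)
        ≤ (if x ∈ L then p * A else 0) + A := by
    split_ifs with hx
    · have hS : stabilizer (MulAut K) (Subgroup.inclusion hHK x) = ⊤ :=
        eq_top_iff.mpr fun α _ => hx α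
      rw [hS, Subgroup.card_top]
    · have hS : stabilizer (MulAut K) (Subgroup.inclusion hHK x) ≠ ⊤ := fun hS =>
        hx fun α => (hS ▸ Subgroup.mem_top α : α ∈ stabilizer _ _)
      simpa using Subgroup.mul_card_le_card_of_ne_top hS hmin
  have hL : Nat.card L = (Finset.univ.filter (· ∈ L)).card := by
    rw [Nat.card_eq_fintype_card, Fintype.card_subtype]
  have hsum := Finset.sum_le_sum fun x (_ : x ∈ Finset.univ) => hterm x
  simp only [Finset.sum_add_distrib, Finset.sum_ite, Finset.sum_const, smul_eq_mul,
    ← Finset.mul_sum, Finset.card_univ] at hsum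
  rw [card_autPairs_one, hL, Nat.card_eq_fintype_card (α := H)]
  linarith

theorem prAut_one_le {p : ℕ} (hp : 0 < p)
    (hmin : ∀ r : ℕ, r.Prime → r ∣ Nat.card (MulAut K) → p ≤ r) :
    prAut H K hHK 1 ≤
      1 / p + (1 - 1 / p) * ((Nat.card (absCent H K hHK) : ℚ) / Nat.card H) := by
  have key : (p : ℚ) * Nat.card (autPairs H K hHK 1) +
      Nat.card (absCent H K hHK) * Nat.card (MulAut K) ≤
      (p * Nat.card (absCent H K hHK) + Nat.card H) * Nat.card (MulAut K) := by
    exact_mod_cast mul_card_autPairs_one_add_le hHK hmin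
  have hH : (0 : ℚ) < Nat.card H := by exact_mod_cast Nat.card_pos
  have hA : (0 : ℚ) < Nat.card (MulAut K) := by exact_mod_cast Nat.card_pos
  have hp' : (0 : ℚ) < p := by exact_mod_cast hp
  unfold prAut
  rw [div_le_iff₀ (by positivity), ← sub_nonneg]
  field_simp
  linarith

theorem sq_mul_card_absCent_le (hH : ¬ IsMulCommutative H) {q : ℕ}
    (hmin : ∀ r : ℕ, r.Prime → r ∣ Nat.card H → q ≤ r) :
    q ^ 2 * Nat.card (absCent H K hHK) ≤ Nat.card H :=
  calc q ^ 2 * Nat.card (absCent H K hHK)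
        ≤ (Subgroup.center H).index * Nat.card (Subgroup.center H) :=
        Nat.mul_le_mul (Subgroup.sq_le_index_center hH hmin)
          (Subgroup.card_le_of_le (absCent_le_center hHK))
    _ = Nat.card H := by rw [mul_comm, Subgroup.card_mul_index]

end AutoCommuting

theorem sq_add_self_sub_one_div_cube_le_five_eighths {p : ℚ} (hp : 2 ≤ p) :
    (p ^ 2 + p - 1) / p ^ 3 ≤ 5 / 8 := by
  rw [div_le_div_iff₀ (by positivity) (by norm_num)]
  nlinarith [mul_nonneg (mul_nonneg (sub_nonneg.2 hp) (sub_nonneg.2 hp)) (sub_nonneg.2 hp)]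

theorem stmt_16_general {G : Type*} [Group G] [Fintype G] (H K : Subgroup G) (hHK : H ≤ K)
    (hnab : ¬ ∀ a b : ↥H, a * b = b * a)
    (p : ℕ) (hp : p.Prime)
    (hpmin : ∀ r : ℕ, r.Prime → r ∣ Nat.card (MulAut ↥K) → p ≤ r)
    (q : ℕ) (hq : q.Prime)
    (hqmin : ∀ r : ℕ, r.Prime → r ∣ Nat.card ↥H → q ≤ r) :
    prAut H K hHK 1 ≤ ((q : ℚ) ^ 2 + (p : ℚ) - 1) / ((p : ℚ) * (q : ℚ) ^ 2) ∧
      (p = q →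
        prAut H K hHK 1 ≤ ((p : ℚ) ^ 2 + (p : ℚ) - 1) / ((p : ℚ) ^ 3) ∧
          ((p : ℚ) ^ 2 + (p : ℚ) - 1) / ((p : ℚ) ^ 3) ≤ 5 / 8) := by
  have hp2 : (2 : ℚ) ≤ p := by exact_mod_cast hp.two_le
  have hq0 : (0 : ℚ) < q := by exact_mod_cast hq.pos
  have hL : (Nat.card (absCent H K hHK) : ℚ) / Nat.card H ≤ 1 / q ^ 2 := by
    rw [div_le_div_iff₀ (by exact_mod_cast Nat.card_pos) (by positivity), one_mul, mul_comm]
    exact_mod_cast sq_mul_card_absCent_le hHK (fun h => hnab h.is_comm.comm) hqmin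
  have main : prAut H K hHK 1 ≤ ((q : ℚ) ^ 2 + p - 1) / (p * q ^ 2) :=
    calc prAut H K hHK 1
        ≤ 1 / p + (1 - 1 / p) * ((Nat.card (absCent H K hHK) : ℚ) / Nat.card H) :=
          prAut_one_le hHK hp.pos hpmin
      _ ≤ 1 / p + (1 - 1 / p) * (1 / q ^ 2) := by
          gcongr
          rw [sub_nonneg, div_le_one (by positivity)]
          linarith
      _ = ((q : ℚ) ^ 2 + p - 1) / (p * q ^ 2) := by field_simp; ring
  refine ⟨main, fun hpq => ⟨?_, sq_add_self_sub_one_div_cube_le_five_eighths hp2⟩⟩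
  subst hpq
  simpa [← pow_succ'] using main

/-- If `H` is non-abelian and `p`, `q` are the smallest primes dividing `|Aut(K)|` and `|H|`
respectively, then `Pr(H,Aut(K)) ≤ (q²+p-1)/(pq²)`; in particular if `p = q` then
`Pr(H,Aut(K)) ≤ (p²+p-1)/p³ ≤ 5/8`. -/
theorem stmt_16 {G : Type*} [Group G] [Fintype G] (H K : Subgroup G) (hHK : H ≤ K)
    (hnab : ¬ ∀ a b : ↥H, a * b = b * a)
    (p : ℕ) (hp : p.Prime) (hpdvd : p ∣ Nat.card (MulAut ↥K))
    (hpmin : ∀ r : ℕ, r.Prime → r ∣ Nat.card (MulAut ↥K) → p ≤ r)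
    (q : ℕ) (hq : q.Prime) (hqdvd : q ∣ Nat.card ↥H)
    (hqmin : ∀ r : ℕ, r.Prime → r ∣ Nat.card ↥H → q ≤ r) :
    prAut H K hHK 1 ≤ ((q : ℚ) ^ 2 + (p : ℚ) - 1) / ((p : ℚ) * (q : ℚ) ^ 2) ∧
      (p = q →
        prAut H K hHK 1 ≤ ((p : ℚ) ^ 2 + (p : ℚ) - 1) / ((p : ℚ) ^ 3) ∧
          ((p : ℚ) ^ 2 + (p : ℚ) - 1) / ((p : ℚ) ^ 3) ≤ 5 / 8) :=
  stmt_16_general H K hHK hnab p hp hpmin q hq hqmin
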